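/- arXiv:2205.09668 — 3 statements merged into one kernel-verified Lean document; each statement's English description precedes it below -/
import Mathlib

section
/- Let V and V' be finite nonempty types and let P and P' be X-set properties on finite subsets of V and V' respectively. Suppose φ̃ is a graph isomorphism from the P-TAR graph to the P'-TAR graph. Then R' := V' \ φ̃(V) is a P'-irrelevant set, and the map φ defined by φ(S) = φ̃(S) ⊖ R' is a graph isomorphism from the P-TAR graph to the P'-TAR graph satisfying |φ(S)| = |S| for every P-set S of V. -/
/-- The TAR (token addition/removal) graph of a predicate `P` on finite subsets of `V`:
vertices are the `P`-sets, two `P`-sets being adjacent iff their symmetric difference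
has exactly one element. -/
def tarGraph {V : Type*} [DecidableEq V] (P : Finset V → Prop) :
    SimpleGraph {S : Finset V // P S} where
  Adj S T := (symmDiff S.1 T.1).card = 1
  symm := ⟨by intro S T h; rwa [symmDiff_comm]⟩
  loopless := ⟨by intro S h; simp [symmDiff_self] at h⟩

/-- `S` is a minimal `P`-set: `S` is a `P`-set and no proper subset of `S` is a `P`-set. -/
def IsMinimalPSet {V : Type*} (P : Finset V → Prop) (S : Finset V) : Prop :=
  P S ∧ ∀ T : Finset V, T ⊂ S → ¬ P T

/-- `R` is `P`-irrelevant: no minimal `P`-set contains any vertex of `R`. -/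
def IsIrrelevant {V : Type*} (P : Finset V → Prop) (R : Finset V) : Prop :=
  ∀ S : Finset V, IsMinimalPSet P S → ∀ v ∈ R, v ∉ S

/-!
For a superset-closed property the TAR distance between two sets is the size of their symmetric
difference (walk up to the union and back down), so a TAR isomorphism `φ̃` preserves `|S ⊖ T|`.
Put `W = φ̃(V)` and let `T = φ̃(S)`. The `|V \ S|` sets `S ∪ {u}` are distinct neighbours of `S`
one step closer to `V`, so their images are distinct neighbours `T ⊖ {w}` one step closer to `W`,
i.e. with `w ∈ T ⊖ W`. Since `|T ⊖ W| = |V \ S|`, every flip `T ⊖ {w}` with `w ∈ T ⊖ W` is a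
`P'`-set. Hence elements of `R' = V' \ W` can be flipped in and out of `P'`-sets at will, which
makes `R'` irrelevant and `T ↦ T ⊖ R'` an automorphism of the `P'`-TAR graph. Finally
`|φ̃(S) ⊖ R'| = |V'| - |φ̃(S) ⊖ W| = |V'| - |V| + |S|`, and `|V| = |V'|` because the sets
`V \ {v}` are `|V|` distinct neighbours of `V`.
-/

open Finset
open scoped symmDiff

namespace Finset

variable {α : Type*} [DecidableEq α] {s : Finset α} {a : α}

lemma symmDiff_singleton_of_mem (h : a ∈ s) : s ∆ {a} = s.erase a := by
  rw [symmDiff_of_ge (singleton_subset_iff.2 h), sdiff_singleton_eq_erase]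

lemma symmDiff_singleton_of_notMem (h : a ∉ s) : s ∆ {a} = insert a s := by
  rw [(disjoint_singleton_right.2 h).symmDiff_eq_sup, sup_eq_union, union_comm,
    ← insert_eq]

lemma symmDiff_univ [Fintype α] (s : Finset α) : s ∆ univ = sᶜ := by
  rw [← top_eq_univ, symmDiff_top, hnot_eq_compl]

lemma symmDiff_compl_right [Fintype α] (s t : Finset α) : s ∆ tᶜ = (s ∆ t)ᶜ := by
  rw [← symmDiff_univ, ← symmDiff_univ, symmDiff_assoc]

lemma card_le_card_of_injOn_symmDiff_singleton {ι : Type*} {D : Finset ι} {f : ι → Finset α}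
    {x t : Finset α} (hf : Set.InjOn f D) (h : ∀ u ∈ D, ∃ w ∈ t, f u = x ∆ {w}) :
    #D ≤ #t :=
  calc #D = #(D.image f) := (card_image_of_injOn hf).symm
    _ ≤ #(t.image (x ∆ {·})) := card_le_card fun y hy => by
        obtain ⟨u, hu, rfl⟩ := mem_image.1 hy
        obtain ⟨w, hw, hfu⟩ := h u hu
        exact mem_image.2 ⟨w, hw, hfu.symm⟩
    _ ≤ #t := card_image_le

end Finset

namespace SimpleGraph

variable {α β : Type*} {G : SimpleGraph α} {G' : SimpleGraph β}

lemma Hom.edist_le (f : G →g G') (u v : α) : G'.edist (f u) (f v) ≤ G.edist u v := by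
  by_cases h : G.Reachable u v
  · obtain ⟨p, hp⟩ := h.exists_walk_length_eq_edist
    calc G'.edist (f u) (f v) ≤ (p.map f).length := SimpleGraph.edist_le _
      _ = G.edist u v := by rw [Walk.length_map, hp]
  · rw [edist_eq_top_of_not_reachable h]
    exact le_top

lemma Iso.edist_eq (f : G ≃g G') (u v : α) : G'.edist (f u) (f v) = G.edist u v :=
  le_antisymm (f.toHom.edist_le u v) <| by
    simpa using f.symm.toHom.edist_le (f u) (f v)

end SimpleGraph

section TarGraph

variable {V : Type*} [DecidableEq V] {P : Finset V → Prop}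

lemma tarGraph_adj_iff {S T : {S : Finset V // P S}} :
    (tarGraph P).Adj S T ↔ ∃ w, T.1 = S.1 ∆ {w} := by
  refine card_eq_one.trans (exists_congr fun w => ⟨fun h => ?_, fun h => ?_⟩)
  · rw [← h, symmDiff_symmDiff_cancel_left]
  · rw [h, symmDiff_symmDiff_cancel_left]

lemma card_symmDiff_le_length {S T : {S : Finset V // P S}} (p : (tarGraph P).Walk S T) :
    #(S.1 ∆ T.1) ≤ p.length := by
  induction p with
  | nil => simp
  | @cons S T U hadj p ih =>
    have hST : #(S.1 ∆ T.1) = 1 := hadj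
    calc #(S.1 ∆ U.1) ≤ #(S.1 ∆ T.1 ∪ T.1 ∆ U.1) := card_le_card (symmDiff_triangle _ T.1 _)
      _ ≤ #(S.1 ∆ T.1) + #(T.1 ∆ U.1) := card_union_le _ _
      _ ≤ (p.cons hadj).length := by rw [SimpleGraph.Walk.length_cons, hST]; omega

lemma card_symmDiff_le_tarGraph_edist (S T : {S : Finset V // P S}) :
    (#(S.1 ∆ T.1) : ℕ∞) ≤ (tarGraph P).edist S T :=
  le_sInf <| Set.forall_mem_range.2 fun p => by exact_mod_cast card_symmDiff_le_length p

lemma tarGraph_edist_union_le_card (hP : Monotone P) (S : {S : Finset V // P S}) {D : Finset V}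
    (hD : Disjoint S.1 D) :
    (tarGraph P).edist S ⟨S.1 ∪ D, hP subset_union_left S.2⟩ ≤ #D := by
  induction D using Finset.induction_on with
  | empty => simp
  | insert d D hd ih =>
    have hdS : d ∉ S.1 ∪ D := by
      simpa [hd] using disjoint_right.1 hD (mem_insert_self d D)
    have hadj : (tarGraph P).Adj ⟨S.1 ∪ D, hP subset_union_left S.2⟩
        ⟨S.1 ∪ insert d D, hP subset_union_left S.2⟩ :=
      tarGraph_adj_iff.2 ⟨d, show S.1 ∪ insert d D = (S.1 ∪ D) ∆ {d} by
        rw [union_insert, symmDiff_singleton_of_notMem hdS]⟩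
    calc _ ≤ (tarGraph P).edist S ⟨S.1 ∪ D, hP subset_union_left S.2⟩
          + (tarGraph P).edist ⟨S.1 ∪ D, hP subset_union_left S.2⟩
            ⟨S.1 ∪ insert d D, hP subset_union_left S.2⟩ := SimpleGraph.edist_triangle
      _ = (tarGraph P).edist S ⟨S.1 ∪ D, hP subset_union_left S.2⟩ + 1 := by
          rw [SimpleGraph.edist_eq_one_iff_adj.2 hadj]
      _ ≤ #D + 1 := by gcongr; exact ih (disjoint_of_subset_right (subset_insert d D) hD)
      _ = #(insert d D) := by rw [card_insert_of_notMem hd]; push_cast; rfl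

theorem tarGraph_edist (hP : Monotone P) (S T : {S : Finset V // P S}) :
    (tarGraph P).edist S T = #(S.1 ∆ T.1) := by
  refine le_antisymm ?_ (card_symmDiff_le_tarGraph_edist S T)
  set U : {S : Finset V // P S} := ⟨S.1 ∪ T.1, hP subset_union_left S.2⟩
  have hup : (tarGraph P).edist S U ≤ #(T.1 \ S.1) := by
    simpa only [union_sdiff_self_eq_union] using
      tarGraph_edist_union_le_card hP S (disjoint_sdiff (t := T.1))
  have hdown : (tarGraph P).edist T U ≤ #(S.1 \ T.1) := by
    simpa only [union_sdiff_self_eq_union, union_comm T.1 S.1] using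
      tarGraph_edist_union_le_card hP T (disjoint_sdiff (t := S.1))
  calc (tarGraph P).edist S T ≤ (tarGraph P).edist S U + (tarGraph P).edist U T :=
        SimpleGraph.edist_triangle
    _ ≤ #(T.1 \ S.1) + #(S.1 \ T.1) := by
        rw [SimpleGraph.edist_comm (u := U)]; exact add_le_add hup hdown
    _ = #(S.1 ∆ T.1) := by
        rw [add_comm, Finset.symmDiff_def, card_union_of_disjoint disjoint_sdiff_sdiff]
        push_cast; rfl

end TarGraph

section SymmDiffClosed

variable {V : Type*} [DecidableEq V] {P : Finset V → Prop} {R : Finset V}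

lemma isIrrelevant_of_forall_symmDiff_singleton (h : ∀ S, P S → ∀ v ∈ R, P (S ∆ {v})) :
    IsIrrelevant P R := fun S hS v hvR hvS =>
  hS.2 _ (erase_ssubset hvS) (symmDiff_singleton_of_mem hvS ▸ h S hS.1 v hvR)

lemma symmDiff_of_forall_symmDiff_singleton (h : ∀ S, P S → ∀ v ∈ R, P (S ∆ {v}))
    {S : Finset V} (hS : P S) : P (S ∆ R) := by
  induction R using Finset.induction_on generalizing S with
  | empty => rwa [← bot_eq_empty, symmDiff_bot]
  | insert r R hr ih =>
    rw [← symmDiff_singleton_of_notMem hr, ← symmDiff_assoc]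
    exact h _ (ih (fun T hT v hv => h T hT v (mem_insert_of_mem hv)) hS) r (mem_insert_self r R)

def tarGraphSymmDiffIso (R : Finset V) (hR : ∀ S, P S → P (S ∆ R)) :
    tarGraph P ≃g tarGraph P where
  toFun S := ⟨S.1 ∆ R, hR _ S.2⟩
  invFun S := ⟨S.1 ∆ R, hR _ S.2⟩
  left_inv S := Subtype.ext (symmDiff_symmDiff_cancel_right _ _)
  right_inv S := Subtype.ext (symmDiff_symmDiff_cancel_right _ _)
  map_rel_iff' {S T} := by
    change #((S.1 ∆ R) ∆ (T.1 ∆ R)) = 1 ↔ #(S.1 ∆ T.1) = 1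
    rw [symmDiff_symmDiff_symmDiff_comm, symmDiff_self, symmDiff_bot]

end SymmDiffClosed

section TarGraphIso

variable {V V' : Type*} [DecidableEq V] [DecidableEq V']
  {P : Finset V → Prop} {P' : Finset V' → Prop}

theorem card_symmDiff_tarGraphIso (hP : Monotone P) (hP' : Monotone P')
    (ψ : tarGraph P ≃g tarGraph P') (S T : {S : Finset V // P S}) :
    #((ψ S).1 ∆ (ψ T).1) = #(S.1 ∆ T.1) := by
  have := ψ.edist_eq S T
  rwa [tarGraph_edist hP', tarGraph_edist hP, Nat.cast_inj] at this

theorem card_le_card_of_tarGraphIso [Fintype V] [Fintype V'] (hP : Monotone P)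
    (hdel : ∀ v : V, P (univ \ {v})) (ψ : tarGraph P ≃g tarGraph P') :
    Fintype.card V ≤ Fintype.card V' := by
  rcases isEmpty_or_nonempty V with hV | ⟨⟨v₀⟩⟩
  · simp [Fintype.card_eq_zero]
  let U : {S : Finset V // P S} := ⟨univ, hP (subset_univ _) (hdel v₀)⟩
  rw [← card_univ, ← card_univ]
  refine card_le_card_of_injOn_symmDiff_singleton (x := (ψ U).1)
    (f := fun v => (ψ ⟨univ \ {v}, hdel v⟩).1) (fun v _ v' _ h => ?_) fun v _ => ?_
  · simpa [← compl_eq_univ_sdiff] using congrArg Subtype.val (ψ.injective (Subtype.ext h))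
  · have hadj : (tarGraph P').Adj (ψ U) (ψ ⟨univ \ {v}, hdel v⟩) :=
      ψ.map_adj_iff.2 <| tarGraph_adj_iff.2
        ⟨v, show univ \ {v} = univ ∆ {v} by
          rw [symmDiff_singleton_of_mem (mem_univ v), sdiff_singleton_eq_erase]⟩
    obtain ⟨w, hw⟩ := tarGraph_adj_iff.1 hadj
    exact ⟨w, mem_univ w, hw⟩

variable [Fintype V]

lemma card_symmDiff_tarGraphIso_univ (hP : Monotone P) (hP' : Monotone P') (hU : P univ)
    (ψ : tarGraph P ≃g tarGraph P') (S : {S : Finset V // P S}) :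
    #((ψ S).1 ∆ (ψ ⟨univ, hU⟩).1) = #S.1ᶜ := by
  rw [card_symmDiff_tarGraphIso hP hP', symmDiff_univ]

lemma exists_mem_symmDiff_tarGraphIso_insert (hP : Monotone P) (hP' : Monotone P')
    (hU : P univ) (ψ : tarGraph P ≃g tarGraph P') (S : {S : Finset V // P S}) {u : V}
    (hu : u ∉ S.1) :
    ∃ w ∈ (ψ S).1 ∆ (ψ ⟨univ, hU⟩).1,
      (ψ ⟨insert u S.1, hP (subset_insert u S.1) S.2⟩).1 = (ψ S).1 ∆ {w} := by
  set W := (ψ ⟨univ, hU⟩).1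
  set S' : {S : Finset V // P S} := ⟨insert u S.1, hP (subset_insert u S.1) S.2⟩
  have hadj : (tarGraph P').Adj (ψ S) (ψ S') :=
    ψ.map_adj_iff.2 (tarGraph_adj_iff.2 ⟨u, (symmDiff_singleton_of_notMem hu).symm⟩)
  obtain ⟨w, hw⟩ := tarGraph_adj_iff.1 hadj
  refine ⟨w, by_contra fun hwW => ?_, hw⟩
  have hcloser : #((ψ S').1 ∆ W) + 1 = #((ψ S).1 ∆ W) := by
    rw [card_symmDiff_tarGraphIso_univ hP hP', card_symmDiff_tarGraphIso_univ hP hP',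
      compl_insert, card_erase_add_one (mem_compl.2 hu)]
  have hfarther : #((ψ S').1 ∆ W) = #((ψ S).1 ∆ W) + 1 := by
    rw [hw, symmDiff_right_comm, symmDiff_singleton_of_notMem hwW, card_insert_of_notMem hwW]
  omega

theorem tarGraphIso_symmDiff_singleton_of_mem (hP : Monotone P) (hP' : Monotone P')
    (hU : P univ) (ψ : tarGraph P ≃g tarGraph P') (S : {S : Finset V // P S}) {v : V'}
    (hv : v ∈ (ψ S).1 ∆ (ψ ⟨univ, hU⟩).1) : P' ((ψ S).1 ∆ {v}) := by
  classical
  set D := (ψ S).1 ∆ (ψ ⟨univ, hU⟩).1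
  suffices hD : D.filter (fun w => P' ((ψ S).1 ∆ {w})) = D by
    rw [← hD] at hv
    exact (mem_filter.1 hv).2
  refine eq_of_subset_of_card_le (filter_subset _ _) ?_
  calc #D = #S.1ᶜ := card_symmDiff_tarGraphIso_univ hP hP' hU ψ S
    _ ≤ _ := card_le_card_of_injOn_symmDiff_singleton
      (f := fun u => (ψ ⟨insert u S.1, hP (subset_insert u S.1) S.2⟩).1)
      (fun u hu u' _ h => (insert_inj (mem_compl.1 hu)).1 <|
        congrArg Subtype.val (ψ.injective (Subtype.ext h)))
      fun u hu => by
        obtain ⟨w, hw, h⟩ := exists_mem_symmDiff_tarGraphIso_insert hP hP' hU ψ S (mem_compl.1 hu)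
        exact ⟨w, mem_filter.2 ⟨hw, h ▸ (ψ _).2⟩, h⟩

theorem tarGraphIso_symmDiff_singleton_of_notMem (hP : Monotone P) (hP' : Monotone P')
    (hU : P univ) (ψ : tarGraph P ≃g tarGraph P') {T : Finset V'} (hT : P' T) {v : V'}
    (hv : v ∉ (ψ ⟨univ, hU⟩).1) : P' (T ∆ {v}) := by
  by_cases hvT : v ∈ T
  · obtain ⟨S, hS⟩ := ψ.surjective ⟨T, hT⟩
    have := tarGraphIso_symmDiff_singleton_of_mem hP hP' hU ψ S (v := v)
      (by rw [hS]; exact mem_symmDiff.2 (Or.inl ⟨hvT, hv⟩))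
    rwa [hS] at this
  · exact hP' (by rw [symmDiff_singleton_of_notMem hvT]; exact subset_insert v T) hT

end TarGraphIso

theorem iso_irrelevant_correction_general {V V' : Type*}
    [Fintype V] [DecidableEq V] [Nonempty V]
    [Fintype V'] [DecidableEq V']
    (P : Finset V → Prop) (P' : Finset V' → Prop)
    (hP1 : ∀ S T : Finset V, P S → S ⊆ T → P T)
    (hP3 : ∀ v : V, P (Finset.univ \ {v}))
    (hP'1 : ∀ S T : Finset V', P' S → S ⊆ T → P' T)
    (hP'3 : ∀ v : V', P' (Finset.univ \ {v}))
    (φt : tarGraph P ≃g tarGraph P') :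
    IsIrrelevant P'
      (Finset.univ \
        (φt ⟨Finset.univ,
          hP1 _ _ (hP3 (Classical.arbitrary V)) (Finset.subset_univ _)⟩).1) ∧
    ∃ φ : tarGraph P ≃g tarGraph P',
      ∀ S : {S : Finset V // P S},
        (φ S).1 = symmDiff (φt S).1
          (Finset.univ \
            (φt ⟨Finset.univ,
              hP1 _ _ (hP3 (Classical.arbitrary V)) (Finset.subset_univ _)⟩).1) ∧
        (φ S).1.card = S.1.card := by
  have hP : Monotone P := fun S T h hS => hP1 S T hS h
  have hP' : Monotone P' := fun S T h hS => hP'1 S T hS h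
  have hU : P univ := hP (subset_univ _) (hP3 (Classical.arbitrary V))
  have hflip : ∀ T, P' T → ∀ v ∈ univ \ (φt ⟨univ, hU⟩).1, P' (T ∆ {v}) := fun T hT v hv =>
    tarGraphIso_symmDiff_singleton_of_notMem hP hP' hU φt hT (mem_sdiff.1 hv).2
  have hcard : Fintype.card V = Fintype.card V' :=
    (card_le_card_of_tarGraphIso hP hP3 φt).antisymm (card_le_card_of_tarGraphIso hP' hP'3 φt.symm)
  refine ⟨isIrrelevant_of_forall_symmDiff_singleton hflip,
    φt.trans (tarGraphSymmDiffIso _ fun T => symmDiff_of_forall_symmDiff_singleton hflip),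
    fun S => ⟨rfl, ?_⟩⟩
  change #((φt S).1 ∆ (univ \ (φt ⟨univ, hU⟩).1)) = #S.1
  rw [← compl_eq_univ_sdiff, symmDiff_compl_right, card_compl,
    card_symmDiff_tarGraphIso_univ hP hP' hU, card_compl, ← hcard]
  have := card_le_univ S.1
  omega

/-- If `P` and `P'` are X-set properties and `φ̃` is an isomorphism from the `P`-TAR
graph to the `P'`-TAR graph, then `R' = V' \ φ̃(V)` is `P'`-irrelevant and
`φ = ν_{R'} ∘ φ̃` is an isomorphism with `|φ(S)| = |S|` for every `P`-set `S`. -/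
theorem iso_irrelevant_correction {V V' : Type*}
    [Fintype V] [DecidableEq V] [Nonempty V]
    [Fintype V'] [DecidableEq V'] [Nonempty V']
    (P : Finset V → Prop) (P' : Finset V' → Prop)
    (hP1 : ∀ S T : Finset V, P S → S ⊆ T → P T)
    (hP2 : ¬ P ∅)
    (hP3 : ∀ v : V, P (Finset.univ \ {v}))
    (hP'1 : ∀ S T : Finset V', P' S → S ⊆ T → P' T)
    (hP'2 : ¬ P' ∅)
    (hP'3 : ∀ v : V', P' (Finset.univ \ {v}))
    (φt : tarGraph P ≃g tarGraph P') :
    IsIrrelevant P'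
      (Finset.univ \
        (φt ⟨Finset.univ,
          hP1 _ _ (hP3 (Classical.arbitrary V)) (Finset.subset_univ _)⟩).1) ∧
    ∃ φ : tarGraph P ≃g tarGraph P',
      ∀ S : {S : Finset V // P S},
        (φ S).1 = symmDiff (φt S).1
          (Finset.univ \
            (φt ⟨Finset.univ,
              hP1 _ _ (hP3 (Classical.arbitrary V)) (Finset.subset_univ _)⟩).1) ∧
        (φ S).1.card = S.1.card :=
  iso_irrelevant_correction_general P P' hP1 hP3 hP'1 hP'3 φt
end

section
/- For every integer r ≥ 2, the zero forcing TAR graph of the star K_{1,r} is isomorphic to the Cartesian (box) product K_{1,r} □ K₂. -/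
/-- A set `B` is forcing-closed in `G` if no vertex of `B` has exactly one neighbor
outside `B` (i.e. no force can be performed from `B`). The zero forcing closure of `S`
is the smallest forcing-closed set containing `S`. -/
def ZFClosed {V : Type*} (G : SimpleGraph V) (B : Finset V) : Prop :=
  ∀ v ∈ B, ¬ ∃! w : V, G.Adj v w ∧ w ∉ B

/-- `S` is a zero forcing set of `G`: the zero forcing closure of `S` is all of `V`,
equivalently every forcing-closed set containing `S` is all of `V`. -/
def IsZeroForcingSet {V : Type*} [Fintype V] (G : SimpleGraph V) (S : Finset V) : Prop :=
  ∀ B : Finset V, S ⊆ B → ZFClosed G B → B = Finset.univ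

/-!
A set is zero forcing for `K_{1,r}`, `r ≥ 2`, exactly when it misses at most one leaf, whatever
it does at the centre. Splitting a set into its centre part and its leaf part therefore turns the
TAR graph into the box product of the TAR graph of all subsets of a point, which is `K₂`, with the
TAR graph of the leaf sets that miss at most one leaf. Under complementation the latter become
the sets of size at most one, whose TAR graph is the star again: `∅` is the centre and `{i}` is
the leaf `i`, since `#({i} ∆ {j}) = 2` for distinct leaves.
-/

open Finset SimpleGraph
open scoped symmDiff

namespace Finset

variable {α β : Type*} [DecidableEq α] [DecidableEq β]

lemma card_symmDiff_eq_zero {s t : Finset α} : #(s ∆ t) = 0 ↔ s = t := by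
  rw [card_eq_zero, symmDiff_eq_empty]

lemma card_singleton_symmDiff_singleton {a b : α} (h : a ≠ b) : #({a} ∆ {b}) = 2 := by
  rw [symmDiff_eq_union (disjoint_singleton.mpr h), ← insert_eq, card_pair h]

lemma toLeft_symmDiff (u v : Finset (α ⊕ β)) : (u ∆ v).toLeft = u.toLeft ∆ v.toLeft := by
  ext; simp [mem_symmDiff]

lemma toRight_symmDiff (u v : Finset (α ⊕ β)) : (u ∆ v).toRight = u.toRight ∆ v.toRight := by
  ext; simp [mem_symmDiff]

lemma card_symmDiff_toLeft_add_card_symmDiff_toRight (u v : Finset (α ⊕ β)) :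
    #(u.toLeft ∆ v.toLeft) + #(u.toRight ∆ v.toRight) = #(u ∆ v) := by
  rw [← toLeft_symmDiff, ← toRight_symmDiff, card_toLeft_add_card_toRight]

end Finset

def SimpleGraph.Iso.boxProdCongr {α₁ α₂ β₁ β₂ : Type*} {G₁ : SimpleGraph α₁}
    {G₂ : SimpleGraph α₂} {H₁ : SimpleGraph β₁} {H₂ : SimpleGraph β₂}
    (e : G₁ ≃g G₂) (f : H₁ ≃g H₂) : (G₁ □ H₁) ≃g (G₂ □ H₂) where
  toEquiv := e.toEquiv.prodCongr f.toEquiv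
  map_rel_iff' {x y} := by
    simp [boxProd_adj, e.map_adj_iff, f.map_adj_iff, e.injective.eq_iff, f.injective.eq_iff]

section TarGraph

variable {V W : Type*} [DecidableEq V] [DecidableEq W]

def tarGraphIsoOfEquiv {P : Finset V → Prop} {Q : Finset W → Prop} (e : Finset V ≃ Finset W)
    (he : ∀ S T, #(e S ∆ e T) = #(S ∆ T)) (hPQ : ∀ S, P S ↔ Q (e S)) :
    tarGraph P ≃g tarGraph Q where
  toEquiv := e.subtypeEquiv hPQ
  map_rel_iff' {S T} := by
    change #(e S.1 ∆ e T.1) = 1 ↔ #(S.1 ∆ T.1) = 1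
    rw [he]

def tarGraphCongr {P Q : Finset V → Prop} (h : ∀ S, P S ↔ Q S) : tarGraph P ≃g tarGraph Q :=
  tarGraphIsoOfEquiv (Equiv.refl _) (fun _ _ => rfl) h

def tarGraphComplIso [Fintype V] (P : Finset V → Prop) :
    tarGraph (fun S => P Sᶜ) ≃g tarGraph P :=
  tarGraphIsoOfEquiv (compl_involutive.toPerm _)
    (fun S T => congrArg card (compl_symmDiff_compl S T)) (fun _ => Iff.rfl)

def tarGraphSumIso (P : Finset V → Prop) (Q : Finset W → Prop) :
    tarGraph (fun S : Finset (V ⊕ W) => P S.toLeft ∧ Q S.toRight) ≃g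
      tarGraph P □ tarGraph Q where
  toEquiv := (sumEquiv.toEquiv.subtypeEquiv fun _ => Iff.rfl).trans Equiv.subtypeProdEquivProd
  map_rel_iff' {S T} := by
    rw [boxProd_adj, Subtype.ext_iff, Subtype.ext_iff]
    change (#(S.1.toLeft ∆ T.1.toLeft) = 1 ∧ S.1.toRight = T.1.toRight ∨
      #(S.1.toRight ∆ T.1.toRight) = 1 ∧ S.1.toLeft = T.1.toLeft) ↔ #(S.1 ∆ T.1) = 1
    rw [← card_symmDiff_toLeft_add_card_symmDiff_toRight, ← card_symmDiff_eq_zero,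
      ← card_symmDiff_eq_zero]
    omega

end TarGraph

section Subsingleton

variable {V W : Type*} [DecidableEq V] [Subsingleton V]

lemma tarGraph_adj_iff_ne_of_subsingleton {P : Finset V → Prop} {S T : {S // P S}} :
    (tarGraph P).Adj S T ↔ S ≠ T := by
  have hle : #(S.1 ∆ T.1) ≤ 1 := card_le_one.mpr fun _ _ _ _ => Subsingleton.elim _ _
  change #(S.1 ∆ T.1) = 1 ↔ _
  rw [Ne, Subtype.ext_iff, ← card_symmDiff_eq_zero]
  omega

def tarGraphIsoTopOfSubsingleton (P : Finset V → Prop) (e : {S // P S} ≃ W) :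
    tarGraph P ≃g (⊤ : SimpleGraph W) where
  toEquiv := e
  map_rel_iff' {S T} := by
    rw [top_adj, e.injective.ne_iff, tarGraph_adj_iff_ne_of_subsingleton]

end Subsingleton

section CompleteBipartite

variable {α β : Type*} {B : Finset (α ⊕ β)}

lemma completeBipartiteGraph_existsUnique_adj_inl (c : α) :
    (∃! w, (completeBipartiteGraph α β).Adj (.inl c) w ∧ w ∉ B) ↔ ∃! j, .inr j ∉ B := by
  constructor
  · rintro ⟨c' | j, ⟨hadj, hj⟩, huniq⟩
    · simp at hadj
    · exact ⟨j, hj, fun k hk => Sum.inr_injective (huniq _ ⟨by simp, hk⟩)⟩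
  · rintro ⟨j, hj, huniq⟩
    refine ⟨.inr j, ⟨by simp, hj⟩, ?_⟩
    rintro (c' | k) ⟨hadj, hk⟩
    · simp at hadj
    · rw [huniq k hk]

lemma completeBipartiteGraph_existsUnique_adj_inr (j : β) :
    (∃! w, (completeBipartiteGraph α β).Adj (.inr j) w ∧ w ∉ B) ↔ ∃! c, .inl c ∉ B := by
  constructor
  · rintro ⟨c | k, ⟨hadj, hc⟩, huniq⟩
    · exact ⟨c, hc, fun c' hc' => Sum.inl_injective (huniq _ ⟨by simp, hc'⟩)⟩
    · simp at hadj
  · rintro ⟨c, hc, huniq⟩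
    refine ⟨.inl c, ⟨by simp, hc⟩, ?_⟩
    rintro (c' | k) ⟨hadj, hk⟩
    · rw [huniq c' hk]
    · simp at hadj

end CompleteBipartite

section Star

variable {β : Type*} [Fintype β] [DecidableEq β]

lemma zfClosed_star_iff {B : Finset (Fin 1 ⊕ β)} :
    ZFClosed (completeBipartiteGraph (Fin 1) β) B ↔
      (.inl 0 ∈ B → #B.toRightᶜ ≠ 1) ∧ (B.toRight.Nonempty → .inl 0 ∈ B) := by
  simp only [ZFClosed, Sum.forall, Fin.forall_fin_one, completeBipartiteGraph_existsUnique_adj_inl,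
    completeBipartiteGraph_existsUnique_adj_inr, Ne, card_eq_one_iff_existsUnique, mem_compl,
    mem_toRight, Finset.Nonempty, existsUnique_iff_exists, Fin.exists_fin_one, not_not,
    forall_exists_index]

lemma isZeroForcingSet_star_iff (hβ : 1 < Fintype.card β) {S : Finset (Fin 1 ⊕ β)} :
    IsZeroForcingSet (completeBipartiteGraph (Fin 1) β) S ↔ #S.toRightᶜ ≤ 1 := by
  constructor
  · intro hS
    by_contra! hmiss
    -- the centre and the leaves of `S` form a closed set, since at least two leaves are missing
    have hB := hS (univ.disjSum S.toRight) (subset_disjSum.mpr ⟨subset_univ _, Subset.rfl⟩)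
      (zfClosed_star_iff.mpr ⟨fun _ => by rw [toRight_disjSum]; omega, fun _ => by simp⟩)
    have : S.toRight = univ := by simpa using congrArg toRight hB
    simp [this] at hmiss
  · intro hS B hSB hB
    obtain ⟨hcentre, hleaf⟩ := zfClosed_star_iff.mp hB
    have hle : #B.toRightᶜ ≤ 1 :=
      (card_le_card (compl_subset_compl.mpr (toRight_subset_toRight hSB))).trans hS
    have hne : S.toRight.Nonempty := by
      rw [nonempty_iff_ne_empty]
      rintro h
      rw [h, compl_empty, card_univ] at hS
      omega
    have hc : .inl 0 ∈ B := hleaf (hne.mono (toRight_subset_toRight hSB))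
    have hright : B.toRightᶜ = ∅ := card_eq_zero.mp (by have := hcentre hc; omega)
    ext (c | j)
    · simpa [Fin.fin_one_eq_zero c] using hc
    · have : j ∉ B.toRightᶜ := hright ▸ notMem_empty j
      simpa using this

end Star

section CardLeOne

variable {β : Type*}

def starToCardLeOne : Fin 1 ⊕ β → {S : Finset β // #S ≤ 1} :=
  Sum.elim (fun _ => ⟨∅, by simp⟩) (fun b => ⟨{b}, by simp⟩)

lemma starToCardLeOne_bijective : Function.Bijective (starToCardLeOne (β := β)) := by
  constructor
  · rintro (x | a) (y | b) h <;> simp_all [starToCardLeOne, Subtype.ext_iff, Fin.fin_one_eq_zero]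
  · rintro ⟨S, hS⟩
    rcases Nat.le_one_iff_eq_zero_or_eq_one.mp hS with h | h
    · exact ⟨.inl 0, Subtype.ext (card_eq_zero.mp h).symm⟩
    · obtain ⟨b, rfl⟩ := card_eq_one.mp h
      exact ⟨.inr b, rfl⟩

noncomputable def starIsoTarGraphCardLeOne [DecidableEq β] :
    completeBipartiteGraph (Fin 1) β ≃g tarGraph (fun S : Finset β => #S ≤ 1) where
  toEquiv := Equiv.ofBijective _ starToCardLeOne_bijective
  map_rel_iff' {x y} := by
    change #((starToCardLeOne x).1 ∆ (starToCardLeOne y).1) = 1 ↔ _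
    rcases x with x | a <;> rcases y with y | b
    · simp [starToCardLeOne]
    · simp [starToCardLeOne, symmDiff_eq_union]
    · simp [starToCardLeOne, symmDiff_eq_union]
    · by_cases h : a = b
      · simp [starToCardLeOne, h]
      · simp [starToCardLeOne, card_singleton_symmDiff_singleton h]

end CardLeOne

/-- For `r ≥ 2`, the zero forcing TAR graph of the star `K_{1,r}` is isomorphic to the
Cartesian (box) product `K_{1,r} □ K₂`. -/
theorem zTar_star_iso_boxProd (r : ℕ) (hr : 2 ≤ r) :
    Nonempty
      (tarGraph (IsZeroForcingSet (completeBipartiteGraph (Fin 1) (Fin r)))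
        ≃g (completeBipartiteGraph (Fin 1) (Fin r) □ (⊤ : SimpleGraph (Fin 2)))) := by
  have hZF (S : Finset (Fin 1 ⊕ Fin r)) :
      IsZeroForcingSet (completeBipartiteGraph (Fin 1) (Fin r)) S ↔ True ∧ #S.toRightᶜ ≤ 1 := by
    rw [true_and, isZeroForcingSet_star_iff (by rw [Fintype.card_fin]; omega)]
  let centre : tarGraph (fun _ : Finset (Fin 1) => True) ≃g (⊤ : SimpleGraph (Fin 2)) :=
    tarGraphIsoTopOfSubsingleton _
      ((Equiv.subtypeUnivEquiv fun _ => trivial).trans (Fintype.equivFinOfCardEq (by simp)))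
  let leaves : tarGraph (fun T : Finset (Fin r) => #Tᶜ ≤ 1) ≃g
      completeBipartiteGraph (Fin 1) (Fin r) :=
    (tarGraphComplIso _).trans starIsoTarGraphCardLeOne.symm
  exact ⟨(tarGraphCongr hZF).trans <|
    (tarGraphSumIso _ _).trans <| (Iso.boxProdCongr centre leaves).trans (boxProdComm _ _)⟩
end

section
/- For r ≥ 2, let H(r) be the graph on vertex set {1, …, 2r+4} in which V₁ = {1, …, r+2} induces a complete graph, V₂ = {r+3, …, 2r+4} induces a complete graph, and additionally vertex i is adjacent to vertex r+2+i for each i = 1, …, r; let U₁ = {r+1, r+2} and U₂ = {2r+3, 2r+4}. Then: (i) a set S of vertices with |S ∩ V₁| ≥ |S ∩ V₂| is a zero forcing set of H(r) if and only if |S ∩ V₁| ≥ r+1 and S ∩ U₂ ≠ ∅; (ii) the zero forcing number of H(r) equals r+2 and every minimal zero forcing set of H(r) has cardinality r+2; (iii) the induced subgraph of the zero forcing TAR graph of H(r) on zero forcing sets of cardinality at most 2r+1 is disconnected, while the induced subgraph on zero forcing sets of cardinality at most 2r+2 is connected. -/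
/-- The `k`-TAR graph: the induced subgraph of the TAR graph of `P` on the
`P`-sets of cardinality at most `k`. -/
def tarGraphLe {V : Type*} [DecidableEq V] (P : Finset V → Prop) (k : ℕ) :
    SimpleGraph {S : Finset V // P S ∧ S.card ≤ k} where
  Adj S T := (symmDiff S.1 T.1).card = 1
  symm := ⟨by intro S T h; rwa [symmDiff_comm]⟩
  loopless := ⟨by intro S h; simp [symmDiff_self] at h⟩

/-- The graph `H(r)`: its `2r+4` vertices (here `0`-indexed, so paper vertex `i`
corresponds to `Fin` value `i-1`) consist of a clique `V₁` on values `< r+2` and a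
clique `V₂` on values `≥ r+2`, together with a matching joining value `i` to value
`i + (r+2)` for `i < r`. -/
def Hgraph (r : ℕ) : SimpleGraph (Fin (2 * r + 4)) :=
  SimpleGraph.fromRel (fun a b =>
    (a.val < r + 2 ∧ b.val < r + 2) ∨
    (r + 2 ≤ a.val ∧ r + 2 ≤ b.val) ∨
    (a.val < r ∧ b.val = a.val + (r + 2)))

/-!
A zero forcing set of `H(r)` meets both unmatched pairs `U₁` and `U₂`, each being a pair of twins,
and has `r + 1` vertices in one of the cliques, since a set missing two vertices of each clique is
closed. Conversely `r + 1` vertices of `V₁` and one of `U₂` force everything, and symmetrically.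
So the zero forcing sets are the supersets of `(r + 2)`-sets of these two kinds.

Along an edge of the TAR graph a single vertex changes, so a zero forcing set with at most `r`
vertices in `V₂` can only gain an `(r + 1)`-st one while keeping `r + 1` vertices in `V₁`, that is
at size `2r + 2`: this separates the two kinds in `Z-TAR_{2r+1}`. In `Z-TAR_{2r+2}` every set is
joined to a minimum zero forcing set inside it; two minimum sets of the same kind share `r ≥ 2`
vertices, so their union is an admissible common superset, and `hub₁`, `hub₂` link the two kinds.
-/

open Finset

theorem SimpleGraph.Reachable.imp_of_adj {V : Type*} {G : SimpleGraph V} {p : V → Prop}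
    (hp : ∀ ⦃u v⦄, G.Adj u v → p u → p v) {u v : V} (h : G.Reachable u v) (hu : p u) : p v := by
  obtain ⟨w⟩ := h
  induction w with
  | nil => exact hu
  | cons hadj _ ih => exact ih (hp hadj hu)

section General

variable {V : Type*}

theorem ZFClosed.mem_of_forces {G : SimpleGraph V} {B : Finset V} (hB : ZFClosed G B)
    {v w : V} (hv : v ∈ B) (hvw : G.Adj v w) (hothers : ∀ w', G.Adj v w' → w' ∉ B → w' = w) :
    w ∈ B := by
  by_contra hw
  exact hB v hv ⟨w, ⟨hvw, hw⟩, fun w' h => hothers w' h.1 h.2⟩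

theorem ZFClosed.subset_of_isClique {G : SimpleGraph V} {B K : Finset V} (hB : ZFClosed G B)
    (hK : G.IsClique (K : Set V)) {i₁ i₂ : V} (hi : i₁ ≠ i₂) (hi₁ : i₁ ∈ K) (hi₂ : i₂ ∈ K)
    (hN₁ : ∀ w, G.Adj i₁ w → w ∈ K) (hN₂ : ∀ w, G.Adj i₂ w → w ∈ K)
    (hmiss : ∀ x ∈ K, ∀ y ∈ K, x ∉ B → y ∉ B → x = y) : K ⊆ B := by
  intro x hx
  by_contra hxB
  obtain ⟨i, hiK, hix, hN⟩ : ∃ i ∈ K, i ≠ x ∧ ∀ w, G.Adj i w → w ∈ K := by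
    by_cases h : i₁ = x
    · exact ⟨i₂, hi₂, h ▸ hi.symm, hN₂⟩
    · exact ⟨i₁, hi₁, h, hN₁⟩
  have hiB : i ∈ B := by
    by_contra hiB
    exact hix (hmiss i hiK x hx hiB hxB)
  exact hxB (hB.mem_of_forces hiB (hK hiK hx hix) fun w hw hwB => hmiss w (hN w hw) x hx hwB hxB)

theorem eq_of_notMem_of_card_le_card_inter_add_one [DecidableEq V] {K B : Finset V}
    (h : #K ≤ #(K ∩ B) + 1) {x y : V} (hx : x ∈ K) (hy : y ∈ K) (hxB : x ∉ B) (hyB : y ∉ B) :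
    x = y := by
  have hsdiff : #(K \ B) ≤ 1 := by
    have := card_sdiff_add_card_inter K B
    omega
  exact card_le_one.1 hsdiff x (mem_sdiff.2 ⟨hx, hxB⟩) y (mem_sdiff.2 ⟨hy, hyB⟩)

variable [Fintype V]

theorem IsZeroForcingSet.mono {G : SimpleGraph V} {S T : Finset V} (hS : IsZeroForcingSet G S)
    (hST : S ⊆ T) : IsZeroForcingSet G T :=
  fun B hTB hB => hS B (hST.trans hTB) hB

theorem IsZeroForcingSet.mem_or_mem_of_twins [DecidableEq V] {G : SimpleGraph V} {S : Finset V}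
    (hS : IsZeroForcingSet G S) {x y : V} (hxy : x ≠ y)
    (htwins : ∀ v, v ≠ x → v ≠ y → (G.Adj v x ↔ G.Adj v y)) : x ∈ S ∨ y ∈ S := by
  by_contra! h
  have hclosed : ZFClosed G (univ \ {x, y}) := by
    rintro v hv ⟨w, ⟨hvw, hw⟩, huniq⟩
    have hv' : v ≠ x ∧ v ≠ y := by simpa using hv
    have hw' : w = x ∨ w = y := by simpa [or_iff_not_imp_left] using hw
    have hvtw := htwins v hv'.1 hv'.2
    rcases hw' with rfl | rfl
    · exact hxy (huniq y ⟨hvtw.1 hvw, by simp⟩).symm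
    · exact hxy (huniq x ⟨hvtw.2 hvw, by simp⟩)
  have hSB : S ⊆ univ \ {x, y} := fun v hv => by
    simp only [mem_sdiff, mem_univ, mem_insert, mem_singleton, true_and, not_or]
    exact ⟨ne_of_mem_of_not_mem hv h.1, ne_of_mem_of_not_mem hv h.2⟩
  have hx := (hS _ hSB hclosed).symm ▸ mem_univ x
  simp at hx

end General

theorem Finset.inter_eq_inter_of_disjoint_symmDiff {α : Type*} [DecidableEq α] {A B K : Finset α}
    (h : Disjoint (symmDiff A B) K) : A ∩ K = B ∩ K :=
  symmDiff_eq_bot.1 ((inf_symmDiff_distrib_right A B K).symm.trans (disjoint_iff.1 h))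

theorem Finset.card_inter_add_card_inter_le {α : Type*} [DecidableEq α] (A B K : Finset α) :
    #(A ∩ K) + #(B ∩ K) ≤ #K + #(A ∩ B) := by
  have hunion : #(A ∩ K ∪ B ∩ K) ≤ #K :=
    card_le_card (union_subset inter_subset_right inter_subset_right)
  have hinter : #(A ∩ K ∩ (B ∩ K)) ≤ #(A ∩ B) :=
    card_le_card (inter_subset_inter inter_subset_left inter_subset_left)
  have := card_union_add_card_inter (A ∩ K) (B ∩ K)
  omega

section TarGraph

variable {V : Type*} [DecidableEq V] {P : Finset V → Prop} {k : ℕ}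

theorem tarGraphLe_reachable_of_subset (hP : ∀ ⦃S T⦄, S ⊆ T → P S → P T)
    {A B : {S : Finset V // P S ∧ #S ≤ k}} (hAB : A.1 ⊆ B.1) : (tarGraphLe P k).Reachable A B := by
  obtain ⟨A, hA⟩ := A
  obtain ⟨B, hB⟩ := B
  induction h : #(B \ A) generalizing B with
  | zero =>
    obtain rfl : B = A := subset_antisymm (sdiff_eq_empty_iff_subset.1 (card_eq_zero.1 h)) hAB
    rfl
  | succ n ih =>
    obtain ⟨v, hv⟩ : (B \ A).Nonempty := card_pos.1 (by omega)
    rw [mem_sdiff] at hv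
    have hAB' : A ⊆ B.erase v := fun x hx => mem_erase.2 ⟨ne_of_mem_of_not_mem hx hv.2, hAB hx⟩
    have hB' : P (B.erase v) ∧ #(B.erase v) ≤ k := ⟨hP hAB' hA.1, (card_erase_le).trans hB.2⟩
    refine (ih (B.erase v) hB' hAB' ?_).trans (SimpleGraph.Adj.reachable ?_)
    · rw [erase_sdiff_comm, card_erase_of_mem (mem_sdiff.2 hv), h, Nat.add_sub_cancel]
    · change #(symmDiff (B.erase v) B) = 1
      rw [symmDiff_of_le (erase_subset v B), sdiff_erase_self hv.1, card_singleton]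

theorem tarGraphLe_reachable_of_card_union_le (hP : ∀ ⦃S T⦄, S ⊆ T → P S → P T)
    (A B : {S : Finset V // P S ∧ #S ≤ k}) (h : #(A.1 ∪ B.1) ≤ k) :
    (tarGraphLe P k).Reachable A B :=
  let AB : {S : Finset V // P S ∧ #S ≤ k} := ⟨A.1 ∪ B.1, hP subset_union_left A.2.1, h⟩
  (tarGraphLe_reachable_of_subset hP (B := AB) subset_union_left).trans
    (tarGraphLe_reachable_of_subset hP (B := AB) subset_union_right).symm

end TarGraph

namespace Hgraph

variable {r : ℕ}

-- The cliques `V₁`, `V₂` of `H(r)` and their vertices `U₁`, `U₂` left unmatched.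
def V₁ (r : ℕ) : Finset (Fin (2 * r + 4)) := {v | v.val < r + 2}

def V₂ (r : ℕ) : Finset (Fin (2 * r + 4)) := {v | r + 2 ≤ v.val}

def U₁ (r : ℕ) : Finset (Fin (2 * r + 4)) := {v | r ≤ v.val ∧ v.val < r + 2}

def U₂ (r : ℕ) : Finset (Fin (2 * r + 4)) := {v | 2 * r + 2 ≤ v.val}

@[simp] theorem mem_V₁ {v : Fin (2 * r + 4)} : v ∈ V₁ r ↔ v.val < r + 2 := by simp [V₁]

@[simp] theorem mem_V₂ {v : Fin (2 * r + 4)} : v ∈ V₂ r ↔ r + 2 ≤ v.val := by simp [V₂]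

@[simp] theorem mem_U₁ {v : Fin (2 * r + 4)} : v ∈ U₁ r ↔ r ≤ v.val ∧ v.val < r + 2 := by
  simp [U₁]

@[simp] theorem mem_U₂ {v : Fin (2 * r + 4)} : v ∈ U₂ r ↔ 2 * r + 2 ≤ v.val := by simp [U₂]

theorem filter_lt_eq_inter_V₁ (S : Finset (Fin (2 * r + 4))) :
    S.filter (fun v => v.val < r + 2) = S ∩ V₁ r := by
  ext; simp

theorem filter_ge_eq_inter_V₂ (S : Finset (Fin (2 * r + 4))) :
    S.filter (fun v => r + 2 ≤ v.val) = S ∩ V₂ r := by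
  ext; simp

theorem filter_ge_eq_inter_U₂ (S : Finset (Fin (2 * r + 4))) :
    S.filter (fun v => 2 * r + 2 ≤ v.val) = S ∩ U₂ r := by
  ext; simp

theorem card_inter_V₁_add_card_inter_V₂ (S : Finset (Fin (2 * r + 4))) :
    #(S ∩ V₁ r) + #(S ∩ V₂ r) = #S := by
  have h := card_filter_add_card_filter_not (s := S) (fun v => v.val < r + 2)
  simp only [not_lt] at h
  rwa [filter_lt_eq_inter_V₁, filter_ge_eq_inter_V₂] at h

theorem card_V₁ : #(V₁ r) = r + 2 := by
  rw [V₁, Fin.card_filter_val_lt]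
  omega

theorem card_V₂ : #(V₂ r) = r + 2 := by
  have h := card_inter_V₁_add_card_inter_V₂ (univ : Finset (Fin (2 * r + 4)))
  rw [univ_inter, univ_inter, card_V₁, card_univ, Fintype.card_fin] at h
  omega

theorem adj_iff {a b : Fin (2 * r + 4)} :
    (Hgraph r).Adj a b ↔ a.val ≠ b.val ∧
      ((a.val < r + 2 ∧ b.val < r + 2) ∨ (r + 2 ≤ a.val ∧ r + 2 ≤ b.val) ∨
        (a.val < r ∧ b.val = a.val + (r + 2)) ∨ (b.val < r ∧ a.val = b.val + (r + 2))) := by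
  simp only [Hgraph, SimpleGraph.fromRel_adj, ne_eq, Fin.ext_iff]
  omega

theorem isClique_V₁ : (Hgraph r).IsClique (V₁ r : Set (Fin (2 * r + 4))) := by
  intro a ha b hb hab
  simp only [mem_coe, mem_V₁] at ha hb
  have := Fin.val_ne_of_ne hab
  rw [adj_iff]
  omega

theorem isClique_V₂ : (Hgraph r).IsClique (V₂ r : Set (Fin (2 * r + 4))) := by
  intro a ha b hb hab
  simp only [mem_coe, mem_V₂] at ha hb
  have := Fin.val_ne_of_ne hab
  rw [adj_iff]
  omega

theorem nonempty_inter_U₁ {S : Finset (Fin (2 * r + 4))} (hS : IsZeroForcingSet (Hgraph r) S) :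
    (S ∩ U₁ r).Nonempty := by
  have htwins : ∀ v : Fin (2 * r + 4), v ≠ ⟨r, by omega⟩ → v ≠ ⟨r + 1, by omega⟩ →
      ((Hgraph r).Adj v ⟨r, by omega⟩ ↔ (Hgraph r).Adj v ⟨r + 1, by omega⟩) := by
    intro v h₁ h₂
    simp only [ne_eq, Fin.ext_iff] at h₁ h₂
    simp only [adj_iff]
    omega
  rcases hS.mem_or_mem_of_twins (by simp [Fin.ext_iff]) htwins with h | h
  · exact ⟨_, mem_inter.2 ⟨h, by simp⟩⟩
  · exact ⟨_, mem_inter.2 ⟨h, by simp⟩⟩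

theorem nonempty_inter_U₂ {S : Finset (Fin (2 * r + 4))} (hS : IsZeroForcingSet (Hgraph r) S) :
    (S ∩ U₂ r).Nonempty := by
  have htwins : ∀ v : Fin (2 * r + 4), v ≠ ⟨2 * r + 2, by omega⟩ → v ≠ ⟨2 * r + 3, by omega⟩ →
      ((Hgraph r).Adj v ⟨2 * r + 2, by omega⟩ ↔ (Hgraph r).Adj v ⟨2 * r + 3, by omega⟩) := by
    intro v h₁ h₂
    simp only [ne_eq, Fin.ext_iff] at h₁ h₂
    simp only [adj_iff]
    omega
  rcases hS.mem_or_mem_of_twins (by simp [Fin.ext_iff]) htwins with h | h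
  · exact ⟨_, mem_inter.2 ⟨h, by simp⟩⟩
  · exact ⟨_, mem_inter.2 ⟨h, by simp⟩⟩

theorem le_card_inter_V₁_or_le_card_inter_V₂ {S : Finset (Fin (2 * r + 4))}
    (hS : IsZeroForcingSet (Hgraph r) S) : r + 1 ≤ #(S ∩ V₁ r) ∨ r + 1 ≤ #(S ∩ V₂ r) := by
  by_contra! h
  have two_missing : ∀ K : Finset (Fin (2 * r + 4)), #K = r + 2 → #(S ∩ K) < r + 1 →
      ∃ x ∈ K, ∃ y ∈ K, x ≠ y ∧ x ∉ S ∧ y ∉ S := by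
    intro K hK hSK
    have := card_sdiff_add_card_inter K S
    rw [inter_comm] at this
    obtain ⟨x, hx, y, hy, hxy⟩ := one_lt_card.1 (show 1 < #(K \ S) by omega)
    rw [mem_sdiff] at hx hy
    exact ⟨x, hx.1, y, hy.1, hxy, hx.2, hy.2⟩
  obtain ⟨x₁, hx₁, y₁, hy₁, hxy₁, hx₁S, hy₁S⟩ := two_missing _ card_V₁ h.1
  obtain ⟨x₂, hx₂, y₂, hy₂, hxy₂, hx₂S, hy₂S⟩ := two_missing _ card_V₂ h.2
  have hclosed : ZFClosed (Hgraph r) S := by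
    intro v hv hforce
    by_cases hv₁ : v ∈ V₁ r
    · exact hxy₁ (hforce.unique
        ⟨isClique_V₁ hv₁ hx₁ (ne_of_mem_of_not_mem hv hx₁S), hx₁S⟩
        ⟨isClique_V₁ hv₁ hy₁ (ne_of_mem_of_not_mem hv hy₁S), hy₁S⟩)
    · have hv₂ : v ∈ V₂ r := by simp only [mem_V₁, mem_V₂] at hv₁ ⊢; omega
      exact hxy₂ (hforce.unique
        ⟨isClique_V₂ hv₂ hx₂ (ne_of_mem_of_not_mem hv hx₂S), hx₂S⟩
        ⟨isClique_V₂ hv₂ hy₂ (ne_of_mem_of_not_mem hv hy₂S), hy₂S⟩)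
  exact hx₁S ((hS S subset_rfl hclosed).symm ▸ mem_univ x₁)

def ForcesFromV₁ (r : ℕ) (S : Finset (Fin (2 * r + 4))) : Prop :=
  r + 1 ≤ #(S ∩ V₁ r) ∧ (S ∩ U₂ r).Nonempty

def ForcesFromV₂ (r : ℕ) (S : Finset (Fin (2 * r + 4))) : Prop :=
  r + 1 ≤ #(S ∩ V₂ r) ∧ (S ∩ U₁ r).Nonempty

/-- `V₁` fills up from its unmatched pair, the matching then forces `V₂ \ U₂`, and the vertex
of `S` in `U₂` leaves at most one vertex of `V₂` missing. -/
theorem ForcesFromV₁.isZeroForcingSet {S : Finset (Fin (2 * r + 4))} (hS : ForcesFromV₁ r S) :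
    IsZeroForcingSet (Hgraph r) S := by
  obtain ⟨hcard, u, hu⟩ := hS
  rw [mem_inter, mem_U₂] at hu
  intro B hSB hB
  have hV₁ : V₁ r ⊆ B := by
    refine hB.subset_of_isClique isClique_V₁ (i₁ := ⟨r, by omega⟩) (i₂ := ⟨r + 1, by omega⟩)
      (by simp [Fin.ext_iff]) (by simp) (by simp) (fun w hw => ?_) (fun w hw => ?_) ?_
    · rw [adj_iff, Fin.val_mk] at hw; simp only [mem_V₁]; omega
    · rw [adj_iff, Fin.val_mk] at hw; simp only [mem_V₁]; omega
    · have : #(S ∩ V₁ r) ≤ #(V₁ r ∩ B) :=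
        card_le_card (inter_comm S _ ▸ inter_subset_inter_left hSB)
      exact fun x hx y hy => eq_of_notMem_of_card_le_card_inter_add_one (by rw [card_V₁]; omega)
        hx hy
  have hmatched : ∀ j : Fin (2 * r + 4), j.val < 2 * r + 2 → j ∈ B := by
    intro j hj
    by_cases hj₁ : j.val < r + 2
    · exact hV₁ (mem_V₁.2 hj₁)
    refine hB.mem_of_forces (v := ⟨j.val - (r + 2), by omega⟩) (hV₁ (by simp; omega))
      (by rw [adj_iff, Fin.val_mk]; omega) fun w hw hwB => ?_
    have : ¬ w.val < r + 2 := fun h => hwB (hV₁ (mem_V₁.2 h))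
    rw [adj_iff, Fin.val_mk] at hw
    exact Fin.ext (by omega)
  have hV₂ : V₂ r ⊆ B := by
    refine hB.subset_of_isClique isClique_V₂ (i₁ := ⟨2 * r + 2, by omega⟩)
      (i₂ := ⟨2 * r + 3, by omega⟩) (by simp [Fin.ext_iff]) (by simp; omega) (by simp; omega)
      (fun w hw => ?_) (fun w hw => ?_) fun x hx y hy hxB hyB => ?_
    · rw [adj_iff, Fin.val_mk] at hw; simp only [mem_V₂]; omega
    · rw [adj_iff, Fin.val_mk] at hw; simp only [mem_V₂]; omega
    · have hx' : ¬ x.val < 2 * r + 2 := fun h => hxB (hmatched x h)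
      have hy' : ¬ y.val < 2 * r + 2 := fun h => hyB (hmatched y h)
      have hxu : x.val ≠ u.val := fun h => hxB (Fin.ext h ▸ hSB hu.1)
      have hyu : y.val ≠ u.val := fun h => hyB (Fin.ext h ▸ hSB hu.1)
      exact Fin.ext (by omega)
  refine eq_univ_of_forall fun v => ?_
  by_cases hv : v.val < r + 2
  exacts [hV₁ (mem_V₁.2 hv), hV₂ (mem_V₂.2 (by omega))]

theorem ForcesFromV₂.isZeroForcingSet {S : Finset (Fin (2 * r + 4))} (hS : ForcesFromV₂ r S) :
    IsZeroForcingSet (Hgraph r) S := by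
  obtain ⟨hcard, u, hu⟩ := hS
  rw [mem_inter, mem_U₁] at hu
  intro B hSB hB
  have hV₂ : V₂ r ⊆ B := by
    refine hB.subset_of_isClique isClique_V₂ (i₁ := ⟨2 * r + 2, by omega⟩)
      (i₂ := ⟨2 * r + 3, by omega⟩) (by simp [Fin.ext_iff]) (by simp; omega) (by simp; omega)
      (fun w hw => ?_) (fun w hw => ?_) ?_
    · rw [adj_iff, Fin.val_mk] at hw; simp only [mem_V₂]; omega
    · rw [adj_iff, Fin.val_mk] at hw; simp only [mem_V₂]; omega
    · have : #(S ∩ V₂ r) ≤ #(V₂ r ∩ B) :=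
        card_le_card (inter_comm S _ ▸ inter_subset_inter_left hSB)
      exact fun x hx y hy => eq_of_notMem_of_card_le_card_inter_add_one (by rw [card_V₂]; omega)
        hx hy
  have hmatched : ∀ j : Fin (2 * r + 4), (j.val < r ∨ r + 2 ≤ j.val) → j ∈ B := by
    intro j hj
    by_cases hj₂ : r + 2 ≤ j.val
    · exact hV₂ (mem_V₂.2 hj₂)
    replace hj : j.val < r := by omega
    refine hB.mem_of_forces (v := ⟨j.val + (r + 2), by omega⟩) (hV₂ (by simp))
      (by rw [adj_iff, Fin.val_mk]; omega) fun w hw hwB => ?_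
    have : ¬ r + 2 ≤ w.val := fun h => hwB (hV₂ (mem_V₂.2 h))
    rw [adj_iff, Fin.val_mk] at hw
    exact Fin.ext (by omega)
  have hV₁ : V₁ r ⊆ B := by
    refine hB.subset_of_isClique isClique_V₁ (i₁ := ⟨r, by omega⟩) (i₂ := ⟨r + 1, by omega⟩)
      (by simp [Fin.ext_iff]) (by simp) (by simp) (fun w hw => ?_) (fun w hw => ?_)
      fun x hx y hy hxB hyB => ?_
    · rw [adj_iff, Fin.val_mk] at hw; simp only [mem_V₁]; omega
    · rw [adj_iff, Fin.val_mk] at hw; simp only [mem_V₁]; omega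
    · have hx' : ¬ (x.val < r ∨ r + 2 ≤ x.val) := fun h => hxB (hmatched x h)
      have hy' : ¬ (y.val < r ∨ r + 2 ≤ y.val) := fun h => hyB (hmatched y h)
      have hxu : x.val ≠ u.val := fun h => hxB (Fin.ext h ▸ hSB hu.1)
      have hyu : y.val ≠ u.val := fun h => hyB (Fin.ext h ▸ hSB hu.1)
      exact Fin.ext (by omega)
  refine eq_univ_of_forall fun v => ?_
  by_cases hv : v.val < r + 2
  exacts [hV₁ (mem_V₁.2 hv), hV₂ (mem_V₂.2 (by omega))]

theorem isZeroForcingSet_iff {S : Finset (Fin (2 * r + 4))} :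
    IsZeroForcingSet (Hgraph r) S ↔ ForcesFromV₁ r S ∨ ForcesFromV₂ r S := by
  refine ⟨fun hS => ?_, fun h => h.elim ForcesFromV₁.isZeroForcingSet
    ForcesFromV₂.isZeroForcingSet⟩
  rcases le_card_inter_V₁_or_le_card_inter_V₂ hS with h | h
  exacts [Or.inl ⟨h, nonempty_inter_U₂ hS⟩, Or.inr ⟨h, nonempty_inter_U₁ hS⟩]

theorem isZeroForcingSet_iff_forcesFromV₁ {S : Finset (Fin (2 * r + 4))}
    (h : #(S ∩ V₂ r) ≤ #(S ∩ V₁ r)) : IsZeroForcingSet (Hgraph r) S ↔ ForcesFromV₁ r S := by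
  refine ⟨fun hS => ⟨?_, nonempty_inter_U₂ hS⟩, ForcesFromV₁.isZeroForcingSet⟩
  have := le_card_inter_V₁_or_le_card_inter_V₂ hS
  omega

theorem add_two_le_card {S : Finset (Fin (2 * r + 4))}
    (hS : IsZeroForcingSet (Hgraph r) S) : r + 2 ≤ #S := by
  have h₁ : 0 < #(S ∩ V₁ r) := by
    obtain ⟨u, hu⟩ := nonempty_inter_U₁ hS
    exact card_pos.2 ⟨u, by simp only [mem_inter, mem_U₁, mem_V₁] at hu ⊢; exact ⟨hu.1, hu.2.2⟩⟩
  have h₂ : 0 < #(S ∩ V₂ r) := by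
    obtain ⟨u, hu⟩ := nonempty_inter_U₂ hS
    exact card_pos.2 ⟨u, by simp only [mem_inter, mem_U₂, mem_V₂] at hu ⊢; exact ⟨hu.1, by omega⟩⟩
  have := le_card_inter_V₁_or_le_card_inter_V₂ hS
  have := card_inter_V₁_add_card_inter_V₂ S
  omega

theorem ForcesFromV₁.exists_subset {S : Finset (Fin (2 * r + 4))} (hS : ForcesFromV₁ r S) :
    ∃ A ⊆ S, ForcesFromV₁ r A ∧ #A ≤ r + 2 := by
  obtain ⟨hcard, u, hu⟩ := hS
  obtain ⟨T, hT, hTcard⟩ := exists_subset_card_eq hcard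
  rw [mem_inter] at hu
  refine ⟨insert u T, insert_subset hu.1 (hT.trans inter_subset_left), ⟨?_, u, ?_⟩, ?_⟩
  · exact hTcard ▸ card_le_card (subset_inter (subset_insert u T) (hT.trans inter_subset_right))
  · exact mem_inter.2 ⟨mem_insert_self u T, hu.2⟩
  · exact (card_insert_le u T).trans (by omega)

theorem ForcesFromV₂.exists_subset {S : Finset (Fin (2 * r + 4))} (hS : ForcesFromV₂ r S) :
    ∃ A ⊆ S, ForcesFromV₂ r A ∧ #A ≤ r + 2 := by
  obtain ⟨hcard, u, hu⟩ := hS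
  obtain ⟨T, hT, hTcard⟩ := exists_subset_card_eq hcard
  rw [mem_inter] at hu
  refine ⟨insert u T, insert_subset hu.1 (hT.trans inter_subset_left), ⟨?_, u, ?_⟩, ?_⟩
  · exact hTcard ▸ card_le_card (subset_inter (subset_insert u T) (hT.trans inter_subset_right))
  · exact mem_inter.2 ⟨mem_insert_self u T, hu.2⟩
  · exact (card_insert_le u T).trans (by omega)

theorem ForcesFromV₁.le_card_inter {A B : Finset (Fin (2 * r + 4))} (hA : ForcesFromV₁ r A)
    (hB : ForcesFromV₁ r B) : r ≤ #(A ∩ B) := by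
  have := card_inter_add_card_inter_le A B (V₁ r)
  have := card_V₁ (r := r)
  have := hA.1
  have := hB.1
  omega

theorem ForcesFromV₂.le_card_inter {A B : Finset (Fin (2 * r + 4))} (hA : ForcesFromV₂ r A)
    (hB : ForcesFromV₂ r B) : r ≤ #(A ∩ B) := by
  have := card_inter_add_card_inter_le A B (V₂ r)
  have := card_V₂ (r := r)
  have := hA.1
  have := hB.1
  omega

theorem card_eq_of_isMinimalPSet {S : Finset (Fin (2 * r + 4))}
    (hS : IsMinimalPSet (IsZeroForcingSet (Hgraph r)) S) : #S = r + 2 := by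
  obtain ⟨A, hAS, hA, hAcard⟩ : ∃ A ⊆ S, IsZeroForcingSet (Hgraph r) A ∧ #A ≤ r + 2 := by
    rcases isZeroForcingSet_iff.1 hS.1 with h | h
    · obtain ⟨A, hAS, hA, hAcard⟩ := h.exists_subset
      exact ⟨A, hAS, hA.isZeroForcingSet, hAcard⟩
    · obtain ⟨A, hAS, hA, hAcard⟩ := h.exists_subset
      exact ⟨A, hAS, hA.isZeroForcingSet, hAcard⟩
  obtain rfl : A = S := by
    by_contra hne
    exact hS.2 A (ssubset_of_subset_of_ne hAS hne) hA
  exact le_antisymm hAcard (add_two_le_card hA)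

def hub₁ (r : ℕ) : Finset (Fin (2 * r + 4)) :=
  insert ⟨2 * r + 2, by omega⟩ ((V₁ r).erase ⟨r + 1, by omega⟩)

def hub₂ (r : ℕ) : Finset (Fin (2 * r + 4)) :=
  insert ⟨r, by omega⟩ ((V₂ r).erase ⟨2 * r + 3, by omega⟩)

theorem forcesFromV₁_hub₁ : ForcesFromV₁ r (hub₁ r) := by
  refine ⟨?_, ⟨2 * r + 2, by omega⟩, by simp [hub₁]⟩
  calc r + 1 = #((V₁ r).erase ⟨r + 1, by omega⟩) := by
        rw [card_erase_of_mem (by simp), card_V₁]; rfl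
    _ ≤ #(hub₁ r ∩ V₁ r) := card_le_card (subset_inter (subset_insert _ _) (erase_subset _ _))

theorem forcesFromV₂_hub₂ : ForcesFromV₂ r (hub₂ r) := by
  refine ⟨?_, ⟨r, by omega⟩, by simp [hub₂]⟩
  calc r + 1 = #((V₂ r).erase ⟨2 * r + 3, by omega⟩) := by
        rw [card_erase_of_mem (by simp; omega), card_V₂]; rfl
    _ ≤ #(hub₂ r ∩ V₂ r) := card_le_card (subset_inter (subset_insert _ _) (erase_subset _ _))

theorem card_hub₁_le : #(hub₁ r) ≤ r + 2 :=
  (card_insert_le _ _).trans (by rw [card_erase_of_mem (by simp), card_V₁]; omega)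

theorem card_hub₂_le : #(hub₂ r) ≤ r + 2 :=
  (card_insert_le _ _).trans (by rw [card_erase_of_mem (by simp; omega), card_V₂]; omega)

theorem card_hub₁_inter_V₂_le : #(hub₁ r ∩ V₂ r) ≤ 1 :=
  card_le_one.2 fun a ha b hb => by
    simp only [hub₁, mem_inter, mem_insert, mem_erase, mem_V₁, mem_V₂, Fin.ext_iff] at ha hb
    exact Fin.ext (by omega)

theorem two_le_card_hub₂_inter_hub₁ : 2 ≤ #(hub₂ r ∩ hub₁ r) := by
  have hsub : {⟨r, by omega⟩, ⟨2 * r + 2, by omega⟩} ⊆ hub₂ r ∩ hub₁ r := by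
    intro v hv
    simp only [mem_insert, mem_singleton] at hv
    rcases hv with rfl | rfl
    · simp [hub₁, hub₂, Fin.ext_iff]
    · simp [hub₁, hub₂, Fin.ext_iff]; omega
  calc 2 = #({⟨r, by omega⟩, ⟨2 * r + 2, by omega⟩} : Finset (Fin (2 * r + 4))) :=
        (card_pair (by simp [Fin.ext_iff]; omega)).symm
    _ ≤ _ := card_le_card hsub

theorem not_connected_tarGraphLe (hr : 1 ≤ r) :
    ¬ (tarGraphLe (IsZeroForcingSet (Hgraph r)) (2 * r + 1)).Connected := by
  intro hconn
  have hinv : ∀ ⦃A B : {S // IsZeroForcingSet (Hgraph r) S ∧ #S ≤ 2 * r + 1}⦄,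
      (tarGraphLe (IsZeroForcingSet (Hgraph r)) (2 * r + 1)).Adj A B →
      r + 1 ≤ #(A.1 ∩ V₂ r) → r + 1 ≤ #(B.1 ∩ V₂ r) := by
    intro A B hAB hA
    obtain ⟨v, hv⟩ := card_eq_one.1 hAB
    have inter_eq : ∀ K, v ∉ K → A.1 ∩ K = B.1 ∩ K := fun K hvK =>
      inter_eq_inter_of_disjoint_symmDiff (hv ▸ disjoint_singleton_left.2 hvK)
    by_cases hv₂ : v ∈ V₂ r
    · by_contra hB
      have hv₁ : v ∉ V₁ r := by simp only [mem_V₁, mem_V₂] at hv₂ ⊢; omega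
      have h₁ := (le_card_inter_V₁_or_le_card_inter_V₂ B.2.1).resolve_right hB
      rw [← inter_eq _ hv₁] at h₁
      have := card_inter_V₁_add_card_inter_V₂ A.1
      have := A.2.2
      omega
    · rwa [← inter_eq _ hv₂]
  have h := (hconn.preconnected ⟨hub₂ r, forcesFromV₂_hub₂.isZeroForcingSet,
      card_hub₂_le.trans (by omega)⟩ ⟨hub₁ r, forcesFromV₁_hub₁.isZeroForcingSet,
      card_hub₁_le.trans (by omega)⟩).imp_of_adj hinv forcesFromV₂_hub₂.1
  have : r + 1 ≤ 1 := h.trans card_hub₁_inter_V₂_le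
  omega

theorem connected_tarGraphLe (hr : 2 ≤ r) :
    (tarGraphLe (IsZeroForcingSet (Hgraph r)) (2 * r + 2)).Connected := by
  have hmono : ∀ ⦃S T⦄, S ⊆ T → IsZeroForcingSet (Hgraph r) S → IsZeroForcingSet (Hgraph r) T :=
    fun _ _ hST hS => hS.mono hST
  have reachable_of_two_le (X Y : {S // IsZeroForcingSet (Hgraph r) S ∧ #S ≤ 2 * r + 2})
      (hX : #X.1 ≤ r + 2) (hY : #Y.1 ≤ r + 2) (hXY : 2 ≤ #(X.1 ∩ Y.1)) :
      (tarGraphLe (IsZeroForcingSet (Hgraph r)) (2 * r + 2)).Reachable X Y :=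
    tarGraphLe_reachable_of_card_union_le hmono X Y
      (by have := card_union_add_card_inter X.1 Y.1; omega)
  let hub : {S // IsZeroForcingSet (Hgraph r) S ∧ #S ≤ 2 * r + 2} :=
    ⟨hub₁ r, forcesFromV₁_hub₁.isZeroForcingSet, card_hub₁_le.trans (by omega)⟩
  have hreach : ∀ X, (tarGraphLe (IsZeroForcingSet (Hgraph r)) (2 * r + 2)).Reachable X hub := by
    intro X
    rcases isZeroForcingSet_iff.1 X.2.1 with hX | hX
    · obtain ⟨A, hAX, hA, hAcard⟩ := hX.exists_subset
      let A' : {S // IsZeroForcingSet (Hgraph r) S ∧ #S ≤ 2 * r + 2} :=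
        ⟨A, hA.isZeroForcingSet, by omega⟩
      exact (tarGraphLe_reachable_of_subset hmono (A := A') hAX).symm.trans
        (reachable_of_two_le A' hub hAcard card_hub₁_le
          (hr.trans (hA.le_card_inter forcesFromV₁_hub₁)))
    · obtain ⟨A, hAX, hA, hAcard⟩ := hX.exists_subset
      let A' : {S // IsZeroForcingSet (Hgraph r) S ∧ #S ≤ 2 * r + 2} :=
        ⟨A, hA.isZeroForcingSet, by omega⟩
      let hub' : {S // IsZeroForcingSet (Hgraph r) S ∧ #S ≤ 2 * r + 2} :=
        ⟨hub₂ r, forcesFromV₂_hub₂.isZeroForcingSet, card_hub₂_le.trans (by omega)⟩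
      exact (tarGraphLe_reachable_of_subset hmono (A := A') hAX).symm.trans
        ((reachable_of_two_le A' hub' hAcard card_hub₂_le
          (hr.trans (hA.le_card_inter forcesFromV₂_hub₂))).trans
          (reachable_of_two_le hub' hub card_hub₂_le card_hub₁_le
            two_le_card_hub₂_inter_hub₁))
  exact (SimpleGraph.connected_iff _).2 ⟨fun X Y => (hreach X).trans (hreach Y).symm, ⟨hub⟩⟩

theorem isLeast_card_isZeroForcingSet :
    IsLeast {k | ∃ S : Finset (Fin (2 * r + 4)), IsZeroForcingSet (Hgraph r) S ∧ #S = k} (r + 2) :=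
  have hhub := forcesFromV₁_hub₁.isZeroForcingSet
  ⟨⟨hub₁ r, hhub, le_antisymm card_hub₁_le (add_two_le_card hhub)⟩,
    by rintro k ⟨S, hS, rfl⟩; exact add_two_le_card hS⟩

end Hgraph

/-- For `r ≥ 2` and `H(r)` as above, with `V₁` the clique on values `< r+2`, `V₂` the
clique on values `≥ r+2` and `U₂` the pair of values `≥ 2r+2`:
(i) a set `S` with `|S ∩ V₂| ≤ |S ∩ V₁|` is a zero forcing set of `H(r)` iff
`|S ∩ V₁| ≥ r+1` and `S ∩ U₂ ≠ ∅`; (ii) the zero forcing number of `H(r)` is `r+2`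
and every minimal zero forcing set of `H(r)` has cardinality `r+2`; (iii) the TAR
graph of `H(r)` restricted to zero forcing sets of cardinality at most `2r+1` is
disconnected, while the restriction to cardinality at most `2r+2` is connected. -/
theorem Hgraph_zfs_tar (r : ℕ) (hr : 2 ≤ r) :
    (∀ S : Finset (Fin (2 * r + 4)),
        (S.filter (fun v => r + 2 ≤ v.val)).card ≤
          (S.filter (fun v => v.val < r + 2)).card →
        (IsZeroForcingSet (Hgraph r) S ↔
          (r + 1 ≤ (S.filter (fun v => v.val < r + 2)).card ∧
            (S.filter (fun v => 2 * r + 2 ≤ v.val)).Nonempty))) ∧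
    IsLeast {k : ℕ | ∃ S : Finset (Fin (2 * r + 4)),
        IsZeroForcingSet (Hgraph r) S ∧ S.card = k} (r + 2) ∧
    (∀ S : Finset (Fin (2 * r + 4)),
        IsMinimalPSet (IsZeroForcingSet (Hgraph r)) S → S.card = r + 2) ∧
    ¬ (tarGraphLe (IsZeroForcingSet (Hgraph r)) (2 * r + 1)).Connected ∧
    (tarGraphLe (IsZeroForcingSet (Hgraph r)) (2 * r + 2)).Connected := by
  refine ⟨fun S hS => ?_, Hgraph.isLeast_card_isZeroForcingSet,
    fun S => Hgraph.card_eq_of_isMinimalPSet, Hgraph.not_connected_tarGraphLe (by omega),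
    Hgraph.connected_tarGraphLe hr⟩
  rw [Hgraph.filter_lt_eq_inter_V₁, Hgraph.filter_ge_eq_inter_V₂] at hS
  rw [Hgraph.filter_lt_eq_inter_V₁, Hgraph.filter_ge_eq_inter_U₂]
  exact Hgraph.isZeroForcingSet_iff_forcesFromV₁ hS
end
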